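/- Let t be a rooted tree with pairwise distinct leaf labels, S a set of labels, and a a leaf label of t with a ∉ S. Then every vertex v of t with a ∈ L(v) is not complete with respect to S, i.e., counter_S(v) < |L(v)| for every ancestor v of the leaf labeled a (including that leaf itself). -/

import Mathlib

inductive RTree (α : Type*) where
  | leaf (a : α)
  | node (children : List (RTree α))

namespace RTree

variable {α : Type*} [DecidableEq α]

/-- The list of leaf labels of a tree. -/
def leafList : RTree α → List α
  | leaf a => [a]
  | node cs => (cs.attach.map fun ⟨w, _⟩ => leafList w).flatten
decreasing_by have := List.sizeOf_lt_of_mem ‹_›; simp only [node.sizeOf_spec]; omega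

/-- `L v` is the finite set of labels of leaves in the subtree rooted at `v`. -/
def L (v : RTree α) : Finset α := (leafList v).toFinset

/-- The counter function. -/
def counter (S : Finset α) : RTree α → ℕ
  | leaf a => if a ∈ S then 1 else 0
  | node cs =>
      (cs.attach.map fun ⟨w, _⟩ =>
        if counter S w = (L w).card then counter S w else 0).sum
decreasing_by have := List.sizeOf_lt_of_mem ‹_›; simp only [node.sizeOf_spec]; omega

/-- `IsVertex v t` means that `v` is a vertex (subtree) of `t`. -/
inductive IsVertex : RTree α → RTree α → Prop
  | refl (t : RTree α) : IsVertex t t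
  | child {v w : RTree α} {cs : List (RTree α)} : w ∈ cs → IsVertex v w → IsVertex v (node cs)

/-- The list of all vertices (subtrees) of a tree. -/
def vertexList : RTree α → List (RTree α)
  | leaf a => [leaf a]
  | node cs => node cs :: (cs.attach.map fun ⟨w, _⟩ => vertexList w).flatten
decreasing_by have := List.sizeOf_lt_of_mem ‹_›; simp only [node.sizeOf_spec]; omega

end RTree

/-
A leaf whose label is missing from `S` is incomplete, and incompleteness propagates to the
parent: every child `w` contributes at most `|L(w)|` to the counter, the incomplete child on the
path to the leaf contributes `0 < |L(w)|`, and distinct labels make `|L(v)|` the sum of the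
`|L(w)|` over the children.
-/

namespace RTree

variable {α : Type*}

lemma leafList_node (cs : List (RTree α)) :
    leafList (node cs) = (cs.map leafList).flatten := by
  rw [leafList, ← List.attach_map_val (l := cs) (f := leafList)]

lemma mem_leafList_node {a : α} {cs : List (RTree α)} :
    a ∈ leafList (node cs) ↔ ∃ w ∈ cs, a ∈ leafList w := by
  simp [leafList_node]

lemma nodup_leafList_of_mem {cs : List (RTree α)} {w : RTree α}
    (hnd : (leafList (node cs)).Nodup) (hw : w ∈ cs) : (leafList w).Nodup := by
  rw [leafList_node] at hnd
  exact hnd.sublist (List.sublist_flatten_of_mem (List.mem_map_of_mem hw))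

lemma IsVertex.nodup_leafList {v t : RTree α} (hv : IsVertex v t) (hnd : (leafList t).Nodup) :
    (leafList v).Nodup := by
  induction hv with
  | refl => exact hnd
  | child hw _ ih => exact ih (nodup_leafList_of_mem hnd hw)

variable [DecidableEq α]

lemma counter_node (S : Finset α) (cs : List (RTree α)) :
    counter S (node cs) =
      (cs.map fun w => if counter S w = (L w).card then counter S w else 0).sum := by
  rw [counter, ← List.attach_map_val (l := cs)
    (f := fun w => if counter S w = (L w).card then counter S w else 0)]

lemma card_L_node {cs : List (RTree α)} (hnd : (leafList (node cs)).Nodup) :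
    (L (node cs)).card = (cs.map fun w => (L w).card).sum := by
  rw [L, List.toFinset_card_of_nodup hnd, leafList_node, List.length_flatten, List.map_map]
  refine congrArg List.sum (List.map_congr_left fun w hw => ?_)
  exact (List.toFinset_card_of_nodup (nodup_leafList_of_mem hnd hw)).symm

theorem counter_lt_card_L {S : Finset α} {a : α} (haS : a ∉ S) :
    ∀ v : RTree α, (leafList v).Nodup → a ∈ leafList v → counter S v < (L v).card
  | leaf b => by
    intro _ ha
    obtain rfl : a = b := by simpa [leafList] using ha
    simp [counter, L, leafList, haS]
  | node cs => by
    intro hnd ha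
    obtain ⟨w, hw, haw⟩ := mem_leafList_node.mp ha
    have hw_incomplete : counter S w ≠ (L w).card :=
      (counter_lt_card_L haS w (nodup_leafList_of_mem hnd hw) haw).ne
    have hw_pos : 0 < (L w).card := Finset.card_pos.mpr ⟨a, List.mem_toFinset.mpr haw⟩
    rw [counter_node, card_L_node hnd]
    refine List.sum_lt_sum _ _ (fun u _ => ?_) ⟨w, hw, by simpa [hw_incomplete] using hw_pos⟩
    split_ifs <;> omega

theorem not_complete_of_missing_leaf_general (t : RTree α) (hnd : t.leafList.Nodup)
    (S : Finset α) (a : α) (haS : a ∉ S) :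
    ∀ v : RTree α, IsVertex v t → a ∈ L v → counter S v < (L v).card :=
  fun v hv haL => counter_lt_card_L haS v (hv.nodup_leafList hnd) (List.mem_toFinset.mp haL)

/-- if `a` is a leaf label of `t` with `a ∉ S`, then every vertex `v` with
`a ∈ L(v)` (i.e. every ancestor of the leaf labeled `a`, including that leaf) is not complete
with respect to `S`: `counter_S(v) < |L(v)|`. -/
theorem not_complete_of_missing_leaf (t : RTree α) (hnd : t.leafList.Nodup)
    (S : Finset α) (a : α) (ha : a ∈ leafList t) (haS : a ∉ S) :
    ∀ v : RTree α, IsVertex v t → a ∈ L v → counter S v < (L v).card :=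
  not_complete_of_missing_leaf_general t hnd S a haS

end RTree
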